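/- arXiv:1505.01635 — 3 statements merged into one kernel-verified Lean document; each statement's English description precedes it below -/
import Mathlib

section
/- The E6 hyperpolynomial of the (3,2) torus knot satisfies the following five specialization identities in the Laurent polynomial ring Z[q^{±1}, t^{±1}]: (i) HD32(q,t,-1) = JDE6_32(q,t); (ii) HD32(q,t,-t^{-4}) = JDD5_32(q,t); (iii) HD32(q,t,-t^{-5}) = 1 + q*t - q*t^7 (the DAHA-Jones polynomial of type (A6, omega_1) for the (3,2) torus knot); (iv) HD32(q,t,-t^{-8}) = 1; (v) HD32(q,t,-q^{-1}*t^{-12}) = q^2*t^8. -/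
open LaurentPolynomial

/-- The E6 hyperpolynomial of the (3,2) torus knot (DAHA conventions). -/
def HD32 {R : Type*} [CommRing R] (q t a : R) : R :=
  1 + q*t + q*t^4 + q*t^9*a + q*t^12*a + q^2*t^8 + q^2*t^13*a + q^2*t^16*a + q^2*t^21*a^2

/-- The DAHA-Jones polynomial of type (E6, ω₁) for the (3,2) torus knot. -/
def JDE6_32 {R : Type*} [CommRing R] (q t : R) : R :=
  1 + q*t + q*t^4 - q*t^9 - q*t^12 + q^2*t^8 - q^2*t^13 - q^2*t^16 + q^2*t^21

/-- The DAHA-Jones polynomial of type (D5, ω₁) for the (3,2) torus knot. -/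
def JDD5_32 {R : Type*} [CommRing R] (q t : R) : R :=
  1 + q*t + q*t^4 - q*t^5 - q*t^8 + q^2*t^8 - q^2*t^9 - q^2*t^12 + q^2*t^13

/-- The Laurent polynomial ring ℤ[q^{±1}, t^{±1}]: `q` is the inner variable, `t` the outer. -/
abbrev Rqt : Type := LaurentPolynomial (LaurentPolynomial ℤ)

/-- The variable q in ℤ[q^{±1}, t^{±1}]. -/
noncomputable def qv : Rqt := C (T 1)
/-- The variable t in ℤ[q^{±1}, t^{±1}]. -/
noncomputable def tv : Rqt := T 1
/-- The element q⁻¹ in ℤ[q^{±1}, t^{±1}]. -/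
noncomputable def qiv : Rqt := C (T (-1))
/-- The element t⁻¹ in ℤ[q^{±1}, t^{±1}]. -/
noncomputable def tiv : Rqt := T (-1)

lemma ht : tv * tiv = 1 := by
  rw [tv, tiv, ← T_add]
  norm_num

lemma hq : qv * qiv = 1 := by
  rw [qv, qiv, ← map_mul, ← T_add]
  norm_num

lemma hn (n : ℕ) : tv ^ n * tiv ^ n = 1 := by
  rw [← mul_pow, ht, one_pow]

/-- The five specialization identities of the E6 hyperpolynomial of the (3,2) torus knot
in the Laurent polynomial ring ℤ[q^{±1}, t^{±1}]. -/
theorem E6_hyperpolynomial_T32_specializations :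
    HD32 qv tv (-1) = JDE6_32 qv tv ∧
    HD32 qv tv (-(tiv^4)) = JDD5_32 qv tv ∧
    HD32 qv tv (-(tiv^5)) = 1 + qv*tv - qv*tv^7 ∧
    HD32 qv tv (-(tiv^8)) = 1 ∧
    HD32 qv tv (-(qiv * tiv^12)) = qv^2 * tv^8 := by
  refine ⟨?_, ?_, ?_, ?_, ?_⟩
  · unfold HD32 JDE6_32; ring
  · unfold HD32 JDD5_32
    linear_combination (-qv*tv^5 - qv*tv^8 - qv^2*tv^9 - qv^2*tv^12) * hn 4 +
      (qv^2*tv^13) * hn 8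
  · unfold HD32
    linear_combination (-qv*tv^4 - qv*tv^7 - qv^2*tv^8 + qv^2*tv^16*tiv^5) * hn 5
  · unfold HD32
    linear_combination (-qv*tv - qv*tv^4 - qv^2*tv^8 + qv^2*tv^13*tiv^8) * hn 8
  · unfold HD32
    linear_combination
      (-tv^9*tiv^12 - tv^12*tiv^12 - qv*tv^13*tiv^12 - qv*tv^16*tiv^12
        + (1 + qv*qiv)*tv^21*tiv^24) * hq +
      (-(1 + qv*tv + qv*tv^4 - tv^9*tiv^12)) * hn 12
end

section
/- The 'hat symmetry' of the E6 hyperpolynomial of the (3,2) torus knot: substituting q -> q*t^4 and a -> -t^{-4} into HD32 yields the DAHA-Jones polynomial of type (E6, omega_6), i.e., in Z[q^{±1}, t^{±1}] one has HD32(q*t^4, t, -t^{-4}) = 1 + q*t^5 + q*t^8 - q*t^9 - q*t^12 + q^2*t^16 - q^2*t^17 - q^2*t^20 + q^2*t^21. -/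
open LaurentPolynomial

set_option maxRecDepth 10000 in
/-- The hat symmetry of the E6 hyperpolynomial of the (3,2) torus knot: substituting
q ↦ q·t⁴ and a ↦ -t⁻⁴ yields the DAHA-Jones polynomial of type (E6, ω₆), in
the Laurent polynomial ring ℤ[q^{±1}, t^{±1}]. -/
theorem E6_hyperpolynomial_T32_hat_symmetry :
    HD32 (qv * tv^4) tv (-(tiv^4)) =
      1 + qv*tv^5 + qv*tv^8 - qv*tv^9 - qv*tv^12
        + qv^2*tv^16 - qv^2*tv^17 - qv^2*tv^20 + qv^2*tv^21 := by
  simp only [HD32, qv, tv, tiv]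
  ring_nf
  simp only [T_pow, ← T_add, ← map_pow]
  norm_num [← T_add, ← T_sub]
end

section
/- The 'hat symmetry' of the E6 hyperpolynomial of the (5,2) torus knot: substituting q -> q*t^4 and a -> -t^{-4} into HD52 yields the DAHA-Jones polynomial of type (E6, omega_6), i.e., in Z[q^{±1}, t^{±1}] one has HD52(q*t^4, t, -t^{-4}) = 1 + q*(t^5 + t^8 - t^9 - t^12) + q^2*(t^10 + t^13 - t^14 + t^16 - 2*t^17 - t^20 + t^21) + q^3*(t^21 - t^22 + t^24 - 2*t^25 + t^26 - t^28 + t^29) + q^4*(t^32 - t^33 - t^36 + t^37). -/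
open LaurentPolynomial

/-- The E6 hyperpolynomial of the (5,2) torus knot (DAHA conventions). -/
def HD52 {R : Type*} [CommRing R] (q t a : R) : R :=
  1 + q*t + q*t^4 + q*t^9*a + q*t^12*a + q^2*t^2 + q^2*t^5 + q^2*t^8 + q^2*t^10*a
  + 2*q^2*t^13*a + q^2*t^16*a + q^2*t^21*a^2 + q^3*t^9 + q^3*t^12 + q^3*t^14*a
  + 2*q^3*t^17*a + q^3*t^20*a + q^3*t^22*a^2 + q^3*t^25*a^2 + q^4*t^16 + q^4*t^21*a
  + q^4*t^24*a + q^4*t^29*a^2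
/-- The hat symmetry of the E6 hyperpolynomial of the (5,2) torus knot: substituting
q ↦ q·t⁴ and a ↦ -t⁻⁴ yields the DAHA-Jones polynomial of type (E6, ω₆), in
the Laurent polynomial ring ℤ[q^{±1}, t^{±1}]. -/
theorem E6_hyperpolynomial_T52_hat_symmetry :
    HD52 (qv * tv^4) tv (-(tiv^4)) =
      1 + qv*(tv^5 + tv^8 - tv^9 - tv^12)
        + qv^2*(tv^10 + tv^13 - tv^14 + tv^16 - 2*tv^17 - tv^20 + tv^21)
        + qv^3*(tv^21 - tv^22 + tv^24 - 2*tv^25 + tv^26 - tv^28 + tv^29)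
        + qv^4*(tv^32 - tv^33 - tv^36 + tv^37) := by
  have h4 : tv^4 * tiv^4 = 1 := by
    rw [tv, tiv, T_pow, T_pow, ← T_add]
    norm_num
  unfold HD52
  linear_combination (-(qv*tv^9 + qv*tv^12 + qv^2*tv^14 + 2*qv^2*tv^17 + qv^2*tv^20
      + qv^3*tv^22 + 2*qv^3*tv^25 + qv^3*tv^28 + qv^4*tv^33 + qv^4*tv^36)
    + (qv^2*tv^21 + qv^3*tv^26 + qv^3*tv^29 + qv^4*tv^37)*(tv^4*tiv^4 + 1)) * h4
end
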